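/- Any set of pairwise unbiased real weighing matrices of order 8 and weight 4 has at most 14 elements. -/
import Mathlib

open Matrix

def IsRealWeighing {n : ℕ} (w : ℕ) (W : Matrix (Fin n) (Fin n) ℝ) : Prop :=
  (∀ i j, W i j = 0 ∨ W i j = 1 ∨ W i j = -1) ∧ W * Wᵀ = (w : ℝ) • 1

def RealUnbiased {n : ℕ} (w : ℕ) (H K : Matrix (Fin n) (Fin n) ℝ) : Prop :=
  ∃ L, IsRealWeighing w L ∧ H * Kᵀ = Real.sqrt w • L

namespace Stmt17Aux

abbrev Q8 := Fin 8 × Fin 8 × Fin 8 × Fin 8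

noncomputable def dl (a b : Fin 8) : ℝ := if a = b then 1 else 0

noncomputable def Sm : Q8 → ℝ := fun p =>
  3*(dl p.1 p.2.1 * dl p.2.2.1 p.2.2.2 + dl p.1 p.2.2.1 * dl p.2.1 p.2.2.2
     + dl p.1 p.2.2.2 * dl p.2.1 p.2.2.1)
  - 2*(dl p.1 p.2.1 * dl p.1 p.2.2.1 * dl p.1 p.2.2.2)

lemma Sm_sq (p : Q8) : Sm p ^ 2 =
    9*(dl p.1 p.2.1 * dl p.2.2.1 p.2.2.2 + dl p.1 p.2.2.1 * dl p.2.1 p.2.2.2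
       + dl p.1 p.2.2.2 * dl p.2.1 p.2.2.1)
    + 22*(dl p.1 p.2.1 * dl p.1 p.2.2.1 * dl p.1 p.2.2.2) := by
  obtain ⟨a,b,c,d⟩ := p
  simp only [Sm, dl]
  split_ifs <;> subst_vars <;> simp_all <;> norm_num

lemma sumD1 : ∑ p : Q8, dl p.1 p.2.1 * dl p.2.2.1 p.2.2.2 = 64 := by
  norm_num [Fintype.sum_prod_type, dl, mul_ite, ite_mul, mul_zero, zero_mul, mul_one,
    Finset.sum_ite_eq, Finset.sum_const, Finset.card_univ, apply_ite (Finset.card),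
    apply_ite (Nat.cast : ℕ → ℝ)]
lemma sumD2 : ∑ p : Q8, dl p.1 p.2.2.1 * dl p.2.1 p.2.2.2 = 64 := by
  norm_num [Fintype.sum_prod_type, dl, mul_ite, ite_mul, mul_zero, zero_mul, mul_one,
    Finset.sum_ite_eq, Finset.sum_const, Finset.card_univ, apply_ite (Finset.card),
    apply_ite (Nat.cast : ℕ → ℝ)]
lemma sumD3 : ∑ p : Q8, dl p.1 p.2.2.2 * dl p.2.1 p.2.2.1 = 64 := by
  norm_num [Fintype.sum_prod_type, dl, mul_ite, ite_mul, mul_zero, zero_mul, mul_one,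
    Finset.sum_ite_eq, Finset.sum_const, Finset.card_univ, apply_ite (Finset.card),
    apply_ite (Nat.cast : ℕ → ℝ)]
lemma sumD4 : ∑ p : Q8, dl p.1 p.2.1 * dl p.1 p.2.2.1 * dl p.1 p.2.2.2 = 8 := by
  norm_num [Fintype.sum_prod_type, dl, mul_ite, ite_mul, mul_zero, zero_mul, mul_one,
    Finset.sum_ite_eq, Finset.sum_const, Finset.card_univ, apply_ite (Finset.card),
    apply_ite (Nat.cast : ℕ → ℝ)]

lemma sum_Sm_sq : ∑ p : Q8, Sm p ^ 2 = 1904 := by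
  have : ∑ p : Q8, Sm p ^ 2 =
      9*((∑ p : Q8, dl p.1 p.2.1 * dl p.2.2.1 p.2.2.2)
        + (∑ p : Q8, dl p.1 p.2.2.1 * dl p.2.1 p.2.2.2)
        + (∑ p : Q8, dl p.1 p.2.2.2 * dl p.2.1 p.2.2.1))
      + 22*(∑ p : Q8, dl p.1 p.2.1 * dl p.1 p.2.2.1 * dl p.1 p.2.2.2) := by
    simp only [Sm_sq, Finset.sum_add_distrib, Finset.mul_sum, mul_add]
  rw [this, sumD1, sumD2, sumD3, sumD4]; norm_num

lemma prod_sum4 (F G : Fin 8 → ℝ) :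
    ∑ p : Q8, (F p.1 * F p.2.1 * F p.2.2.1 * F p.2.2.2) *
      (G p.1 * G p.2.1 * G p.2.2.1 * G p.2.2.2) = (∑ a, F a * G a)^4 := by
  rw [show ((∑ a, F a * G a)^4) = (∑ a, F a * G a) * ((∑ a, F a * G a) *
      ((∑ a, F a * G a) * (∑ a, F a * G a))) from by ring]
  simp only [Fintype.sum_prod_type, Finset.sum_mul, Finset.mul_sum]
  refine Finset.sum_congr rfl fun a _ => ?_
  refine Finset.sum_congr rfl fun b _ => ?_
  refine Finset.sum_congr rfl fun c _ => ?_
  refine Finset.sum_congr rfl fun d _ => ?_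
  ring

lemma sum_sq_expand {ι : Type*} [Fintype ι] (v : ι → Fin 8 → ℝ) :
    ∑ p : Q8, (∑ u, v u p.1 * v u p.2.1 * v u p.2.2.1 * v u p.2.2.2)^2
      = ∑ u, ∑ u', (∑ a, v u a * v u' a)^4 := by
  simp only [pow_two, Finset.sum_mul_sum]
  rw [Finset.sum_comm]
  refine Finset.sum_congr rfl fun u _ => ?_
  rw [Finset.sum_comm]
  refine Finset.sum_congr rfl fun u' _ => ?_
  exact prod_sum4 _ _

lemma row_e1 (h : Fin 8 → ℝ) (h2 : ∑ a, h a * h a = 4) :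
    ∑ p : Q8, (h p.1 * h p.2.1 * h p.2.2.1 * h p.2.2.2) *
      (dl p.1 p.2.1 * dl p.2.2.1 p.2.2.2) = 16 := by
  simp only [Fintype.sum_prod_type, dl, mul_ite, ite_mul, mul_zero, zero_mul, mul_one,
    Finset.sum_ite_eq, Finset.sum_ite_eq', Finset.mem_univ, if_true]
  have key : ∀ a : Fin 8, (∑ x_1 : Fin 8, ∑ x_2 : Fin 8,
      if a = x_1 then h a * h x_1 * h x_2 * h x_2 else 0)
      = ∑ x_2 : Fin 8, (h a * h a) * (h x_2 * h x_2) := by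
    intro a
    rw [Finset.sum_comm]
    simp only [Finset.sum_ite_eq, Finset.mem_univ, if_true]
    exact Finset.sum_congr rfl fun c _ => by ring
  rw [Finset.sum_congr rfl fun a _ => key a, ← Finset.sum_mul_sum, h2]
  norm_num

lemma row_e2 (h : Fin 8 → ℝ) (h2 : ∑ a, h a * h a = 4) :
    ∑ p : Q8, (h p.1 * h p.2.1 * h p.2.2.1 * h p.2.2.2) *
      (dl p.1 p.2.2.1 * dl p.2.1 p.2.2.2) = 16 := by
  simp only [Fintype.sum_prod_type, dl, mul_ite, ite_mul, mul_zero, zero_mul, mul_one,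
    Finset.sum_ite_eq, Finset.sum_ite_eq', Finset.mem_univ, if_true]
  have : (∑ x : Fin 8, ∑ x_1 : Fin 8, h x * h x_1 * h x * h x_1)
      = (∑ a, h a * h a) * (∑ a, h a * h a) := by
    rw [Finset.sum_mul_sum]
    exact Finset.sum_congr rfl fun a _ => Finset.sum_congr rfl fun b _ => by ring
  rw [this, h2]
  norm_num

lemma row_e3 (h : Fin 8 → ℝ) (h2 : ∑ a, h a * h a = 4) :
    ∑ p : Q8, (h p.1 * h p.2.1 * h p.2.2.1 * h p.2.2.2) *
      (dl p.1 p.2.2.2 * dl p.2.1 p.2.2.1) = 16 := by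
  simp only [Fintype.sum_prod_type]
  have inner : ∀ x x1 : Fin 8,
      ∑ x2 : Fin 8, ∑ x3 : Fin 8, (h x * h x1 * h x2 * h x3) * (dl x x3 * dl x1 x2)
        = (h x * h x1) * (h x1 * h x) := by
    intro x x1
    simp [dl, mul_ite, ite_mul, mul_zero, zero_mul, mul_one, Finset.sum_ite_eq,
      Finset.sum_ite_eq']
    ring
  rw [Finset.sum_congr rfl fun x _ => Finset.sum_congr rfl fun x1 _ => inner x x1]
  have : (∑ x : Fin 8, ∑ x_1 : Fin 8, (h x * h x_1) * (h x_1 * h x))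
      = (∑ a, h a * h a) * (∑ a, h a * h a) := by
    rw [Finset.sum_mul_sum]
    exact Finset.sum_congr rfl fun a _ => Finset.sum_congr rfl fun b _ => by ring
  rw [this, h2]
  norm_num

lemma row_e4 (h : Fin 8 → ℝ) (h4 : ∑ a, (h a)^4 = 4) :
    ∑ p : Q8, (h p.1 * h p.2.1 * h p.2.2.1 * h p.2.2.2) *
      (dl p.1 p.2.1 * dl p.1 p.2.2.1 * dl p.1 p.2.2.2) = 4 := by
  simp only [Fintype.sum_prod_type, dl, mul_ite, ite_mul, mul_zero, zero_mul, mul_one,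
    Finset.sum_ite_eq, Finset.sum_ite_eq', Finset.mem_univ, if_true]
  rw [← h4]
  exact Finset.sum_congr rfl fun a _ => by ring

lemma row_TS (h : Fin 8 → ℝ) (h2 : ∑ a, h a * h a = 4) (h4 : ∑ a, (h a)^4 = 4) :
    ∑ p : Q8, (h p.1 * h p.2.1 * h p.2.2.1 * h p.2.2.2) * Sm p = 136 := by
  have expand : ∀ p : Q8, (h p.1 * h p.2.1 * h p.2.2.1 * h p.2.2.2) * Sm p =
      3*((h p.1 * h p.2.1 * h p.2.2.1 * h p.2.2.2) * (dl p.1 p.2.1 * dl p.2.2.1 p.2.2.2)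
        + (h p.1 * h p.2.1 * h p.2.2.1 * h p.2.2.2) * (dl p.1 p.2.2.1 * dl p.2.1 p.2.2.2)
        + (h p.1 * h p.2.1 * h p.2.2.1 * h p.2.2.2) * (dl p.1 p.2.2.2 * dl p.2.1 p.2.2.1))
      - 2*((h p.1 * h p.2.1 * h p.2.2.1 * h p.2.2.2) *
          (dl p.1 p.2.1 * dl p.1 p.2.2.1 * dl p.1 p.2.2.2)) := by
    intro p; simp only [Sm]; ring
  rw [Finset.sum_congr rfl fun p _ => expand p]
  rw [Finset.sum_sub_distrib]
  simp only [← Finset.mul_sum, Finset.sum_add_distrib]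
  rw [row_e1 h h2, row_e2 h h2, row_e3 h h2, row_e4 h h4]
  norm_num

end Stmt17Aux

open Stmt17Aux in
theorem stmt_17 {m : ℕ} (W : Fin m → Matrix (Fin 8) (Fin 8) ℝ)
    (hW : ∀ i, IsRealWeighing 4 (W i))
    (hUnb : ∀ i j, i ≠ j → RealUnbiased 4 (W i) (W j)) :
    m ≤ 14 := by
  have hip : ∀ i j : Fin m, ∀ r s, (W i * (W j)ᵀ) r s = ∑ a, W i r a * W j s a := by
    intro i j r s; simp [Matrix.mul_apply, Matrix.transpose_apply]
  have horth : ∀ i : Fin m, ∀ r s, (∑ a, W i r a * W i s a) = if r = s then 4 else 0 := by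
    intro i r s
    have h := congrFun (congrFun (hW i).2 r) s
    rw [hip i i r s] at h
    rw [h]
    simp [Matrix.smul_apply, Matrix.one_apply, mul_ite, mul_one, mul_zero]
  have hrow2 : ∀ i : Fin m, ∀ r, ∑ a, W i r a * W i r a = 4 := by
    intro i r; simpa using horth i r r
  have hrow4 : ∀ i : Fin m, ∀ r, ∑ a, (W i r a)^4 = 4 := by
    intro i r
    rw [← hrow2 i r]
    refine Finset.sum_congr rfl fun a _ => ?_
    rcases (hW i).1 r a with h|h|h <;> rw [h] <;> norm_num
  have hcross : ∀ i j : Fin m, i ≠ j →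
      ∑ r, ∑ s, (∑ a, W i r a * W j s a)^4 = 512 := by
    intro i j hij
    obtain ⟨L, ⟨hLent, hLmul⟩, hHK⟩ := hUnb i j hij
    have hsq : Real.sqrt (4:ℝ) = 2 := by
      rw [show (4:ℝ) = 2^2 by norm_num, Real.sqrt_sq (by norm_num : (0:ℝ) ≤ 2)]
    have hentry : ∀ r s, (∑ a, W i r a * W j s a) = 2 * L r s := by
      intro r s
      rw [← hip i j r s, hHK]
      simp only [Matrix.smul_apply, smul_eq_mul]
      norm_num [hsq]
    have hL2 : ∀ r, ∑ s, L r s * L r s = 4 := by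
      intro r
      have h := congrFun (congrFun hLmul r) r
      simpa [Matrix.mul_apply, Matrix.transpose_apply, Matrix.smul_apply,
        Matrix.one_apply] using h
    have step : ∀ r, ∑ s, (∑ a, W i r a * W j s a)^4 = 64 := by
      intro r
      have : ∀ s, (∑ a, W i r a * W j s a)^4 = 16 * (L r s * L r s) := by
        intro s
        rw [hentry r s]
        rcases hLent r s with h|h|h <;> rw [h] <;> norm_num
      rw [Finset.sum_congr rfl fun s _ => this s, ← Finset.mul_sum, hL2]
      norm_num
    rw [Finset.sum_congr rfl fun r _ => step r]
    norm_num
  -- the tensor T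
  set T : Q8 → ℝ := fun p => ∑ u : Fin m × Fin 8,
    W u.1 u.2 p.1 * W u.1 u.2 p.2.1 * W u.1 u.2 p.2.2.1 * W u.1 u.2 p.2.2.2 with hTdef
  have hTT : ∑ p : Q8, T p ^ 2 = 512*(m:ℝ)^2 + 1536*m := by
    rw [hTdef]
    rw [sum_sq_expand (v := fun u : Fin m × Fin 8 => W u.1 u.2)]
    have pairval : ∀ i j : Fin m, ∑ r, ∑ s, (∑ a, W i r a * W j s a)^4
        = if i = j then 2048 else 512 := by
      intro i j
      by_cases hij : i = j
      · subst hij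
        simp only [if_true]
        have : ∀ r s : Fin 8, (∑ a, W i r a * W i s a)^4 = if r = s then 256 else 0 := by
          intro r s; rw [horth i r s]; split_ifs <;> norm_num
        rw [Finset.sum_congr rfl fun r _ => Finset.sum_congr rfl fun s _ => this r s]
        norm_num [Finset.sum_ite_eq]
      · rw [if_neg hij]; exact hcross i j hij
    calc ∑ u : Fin m × Fin 8, ∑ u' : Fin m × Fin 8,
          (∑ a, W u.1 u.2 a * W u'.1 u'.2 a)^4
        = ∑ i : Fin m, ∑ j : Fin m, ∑ r : Fin 8, ∑ s : Fin 8,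
            (∑ a, W i r a * W j s a)^4 := by
          simp only [Fintype.sum_prod_type]
          refine Finset.sum_congr rfl fun i _ => ?_
          rw [Finset.sum_comm]
      _ = ∑ i : Fin m, ∑ j : Fin m, (if i = j then (2048:ℝ) else 512) := by
          exact Finset.sum_congr rfl fun i _ => Finset.sum_congr rfl fun j _ => pairval i j
      _ = 512*(m:ℝ)^2 + 1536*m := by
          have : ∀ i : Fin m, ∑ j : Fin m, (if i = j then (2048:ℝ) else 512)
              = 512*m + 1536 := by
            intro i
            have : ∀ j : Fin m, (if i = j then (2048:ℝ) else 512)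
                = 512 + (if i = j then 1536 else 0) := by
              intro j; split_ifs <;> norm_num
            rw [Finset.sum_congr rfl fun j _ => this j, Finset.sum_add_distrib]
            simp [Finset.sum_ite_eq, Finset.sum_const, Finset.card_univ, mul_comm]
          rw [Finset.sum_congr rfl fun i _ => this i]
          simp [Finset.sum_const, Finset.card_univ]
          ring
  have hTS : ∑ p : Q8, T p * Sm p = 1088*m := by
    rw [hTdef]
    simp only [Finset.sum_mul]
    rw [Finset.sum_comm]
    have : ∀ u : Fin m × Fin 8, ∑ p : Q8,
        (W u.1 u.2 p.1 * W u.1 u.2 p.2.1 * W u.1 u.2 p.2.2.1 * W u.1 u.2 p.2.2.2) * Sm p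
        = 136 := fun u => row_TS (W u.1 u.2) (hrow2 u.1 u.2) (hrow4 u.1 u.2)
    rw [Finset.sum_congr rfl fun u _ => this u]
    simp [Finset.sum_const, Finset.card_univ]
    ring
  have CS := Finset.sum_mul_sq_le_sq_mul_sq Finset.univ T Sm
  rw [hTS, hTT, sum_Sm_sq] at CS
  by_contra hm
  push_neg at hm
  have hm' : (15:ℝ) ≤ (m:ℝ) := by exact_mod_cast hm
  nlinarith [CS, hm']
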